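/- Let F be a real n×p matrix and let k ≥ 1 be an even integer with 2.5k ≤ p satisfying δ_{1.5k} + θ_{k,1.5k} < 1. Let β ∈ ℝ^p and y = Fβ. If β̂ is a minimizer of ‖γ‖₁ over all γ ∈ ℝ^p with Fγ = y, then ‖β̂ − β‖₂ ≤ C₀ k^{−1/2} ‖β_{−max(k)}‖₁, where C₀ = 2√2(1 − δ_{1.5k}) / (1 − δ_{1.5k} − θ_{k,1.5k}). -/

import Mathlib

/-- A vector `v ∈ ℝ^p` is `k`-sparse if it has at most `k` nonzero entries. -/
def IsSparse {p : ℕ} (k : ℕ) (v : Fin p → ℝ) : Prop :=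
  ∃ s : Finset (Fin p), s.card ≤ k ∧ ∀ i ∉ s, v i = 0

/-- The ℓ₂ norm of a vector in `ℝ^m`. -/
noncomputable def l2norm {m : ℕ} (v : Fin m → ℝ) : ℝ :=
  Real.sqrt (∑ i, v i ^ 2)

/-- The ℓ₁ norm of a vector in `ℝ^m`. -/
def l1norm {m : ℕ} (v : Fin m → ℝ) : ℝ := ∑ i, |v i|

/-- The `k`-restricted isometry constant `δ_k` of `F`: the smallest `δ` such that
`√(1-δ)‖c‖₂ ≤ ‖Fc‖₂ ≤ √(1+δ)‖c‖₂` for every `k`-sparse vector `c`. -/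
noncomputable def ripConst {n p : ℕ} (F : Matrix (Fin n) (Fin p) ℝ) (k : ℕ) : ℝ :=
  sInf {δ : ℝ | ∀ c : Fin p → ℝ, IsSparse k c →
    Real.sqrt (1 - δ) * l2norm c ≤ l2norm (F.mulVec c) ∧
    l2norm (F.mulVec c) ≤ Real.sqrt (1 + δ) * l2norm c}

/-- The `(k,k')`-restricted orthogonality constant `θ_{k,k'}` of `F`: the smallest `θ` such
that `|⟨Fc, Fc'⟩| ≤ θ‖c‖₂‖c'‖₂` for all `k`-sparse `c` and `k'`-sparse `c'` with disjoint
supports. -/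
noncomputable def roConst {n p : ℕ} (F : Matrix (Fin n) (Fin p) ℝ) (k k' : ℕ) : ℝ :=
  sInf {θ : ℝ | ∀ c c' : Fin p → ℝ, IsSparse k c → IsSparse k' c' →
    (∀ i, c i = 0 ∨ c' i = 0) →
    |∑ i, F.mulVec c i * F.mulVec c' i| ≤ θ * (l2norm c * l2norm c')}

/-!
Put `d = β̂ - β`, so that `F d = 0`, and ℓ₁-minimality of `β̂` places `d` in the cone
`‖d_{Tᶜ}‖₁ ≤ ‖d_T‖₁ + 2‖β_{Tᶜ}‖₁`. Enlarge `T` by the `m` largest entries of `d` outside it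
to a set `U` of size `3m = 1.5k`; off `U`, every `|d i|` is at most the smallest added entry
`c`. Cutting `Uᶜ` into blocks of size `k` in decreasing order of `|d|` gives the shifting bound
`√k · ∑_B ‖d_B‖₂ ≤ k c / 2 + ‖d_{Uᶜ}‖₁`. It controls `‖d_{Uᶜ}‖₂` and, through `θ_{k,1.5k}`,
the inner product `⟨F d_{Uᶜ}, F d_U⟩ = -‖F d_U‖₂²`, whose size the RIP bounds below by
`(1 - δ_{1.5k}) ‖d_U‖₂²`. With the cone condition this is a quadratic inequality in `‖d_U‖₂`;
solving it yields `C₀`.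
-/

open Finset
open scoped Matrix

theorem Finset.exists_subset_card_eq_forall_le {α β : Type*} [DecidableEq α] [LinearOrder β]
    (f : α → β) {A : Finset α} {j : ℕ} (hj : j ≤ A.card) :
    ∃ B ⊆ A, B.card = j ∧ ∀ i ∈ A \ B, ∀ i' ∈ B, f i ≤ f i' := by
  induction j with
  | zero => exact ⟨∅, empty_subset _, card_empty, by simp⟩
  | succ j ih =>
    obtain ⟨B, hBA, hBcard, hBtop⟩ := ih (by omega)
    obtain ⟨i₀, hi₀, hi₀max⟩ := (A \ B).exists_max_image f
      (card_pos.mp (by rw [card_sdiff_of_subset hBA]; omega))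
    refine ⟨insert i₀ B, insert_subset (mem_sdiff.mp hi₀).1 hBA,
      by rw [card_insert_of_notMem (mem_sdiff.mp hi₀).2, hBcard], fun i hi i' hi' ↦ ?_⟩
    have hi : i ∈ A \ B := by simp only [mem_sdiff, mem_insert, not_or] at hi ⊢; tauto
    rcases mem_insert.mp hi' with h | hi'
    · exact h ▸ hi₀max i hi
    · exact hBtop i hi i' hi'

theorem Finset.exists_superset_forall_abs_le {α : Type*} [Fintype α] [DecidableEq α] (d : α → ℝ)
    (T : Finset α) {m : ℕ} (hm : 0 < m) (hmT : m ≤ Tᶜ.card) :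
    ∃ U, T ⊆ U ∧ U.card ≤ T.card + m ∧ ∃ c, 0 ≤ c ∧ (∀ i ∈ Uᶜ, |d i| ≤ c) ∧
      m * c + ∑ i ∈ Uᶜ, |d i| ≤ ∑ i ∈ Tᶜ, |d i| := by
  obtain ⟨T₁, hT₁, hT₁card, hT₁top⟩ := exists_subset_card_eq_forall_le (fun i ↦ |d i|) hmT
  obtain ⟨i₀, hi₀, hi₀min⟩ := T₁.exists_min_image (fun i ↦ |d i|) (card_pos.mp (by omega))
  have hUc : (T ∪ T₁)ᶜ = Tᶜ \ T₁ := by ext; simp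
  refine ⟨T ∪ T₁, subset_union_left, hT₁card ▸ card_union_le T T₁, |d i₀|, abs_nonneg _,
    fun i hi ↦ hT₁top i (hUc ▸ hi) i₀ hi₀, ?_⟩
  have hT₁sum : m * |d i₀| ≤ ∑ i ∈ T₁, |d i| := by
    simpa [hT₁card] using card_nsmul_le_sum T₁ (fun i ↦ |d i|) _ hi₀min
  rw [hUc, ← sum_sdiff hT₁]
  linarith

theorem Finset.sum_abs_le_sqrt_card_mul_sqrt_sum_sq {α : Type*} (s : Finset α) (f : α → ℝ) :
    ∑ i ∈ s, |f i| ≤ √s.card * √(∑ i ∈ s, f i ^ 2) := by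
  simpa using Real.sum_mul_le_sqrt_mul_sqrt s (fun _ ↦ 1) (fun i ↦ |f i|)

theorem Finset.indicator_union_of_disjoint {α M : Type*} [DecidableEq α] [AddZeroClass M]
    {B C : Finset α} (h : Disjoint B C) (v : α → M) :
    ((B ∪ C : Finset α) : Set α).indicator v =
      (B : Set α).indicator v + (C : Set α).indicator v := by
  rw [coe_union, Set.indicator_union_of_disjoint (disjoint_coe.mpr h)]
  rfl

theorem Finset.indicator_add_indicator_compl {α M : Type*} [Fintype α] [DecidableEq α]
    [AddZeroClass M] (U : Finset α) (v : α → M) :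
    (U : Set α).indicator v + ((Uᶜ : Finset α) : Set α).indicator v = v := by
  rw [coe_compl]
  exact Set.indicator_self_add_compl _ v

theorem sqrt_mul_sqrt_sum_sq_le {α : Type*} (k : ℕ) {B : Finset α} {h : α → ℝ} {c : ℝ}
    (hc : 0 ≤ c) (hBc : ∀ i ∈ B, |h i| ≤ c) :
    √k * √(∑ i ∈ B, h i ^ 2) ≤ (k * c + ∑ i ∈ B, |h i|) / 2 := by
  set L := ∑ i ∈ B, |h i|
  have hL : 0 ≤ L := sum_nonneg fun _ _ ↦ abs_nonneg _
  have hsq : ∑ i ∈ B, h i ^ 2 ≤ c * L := by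
    rw [mul_sum]
    refine sum_le_sum fun i hi ↦ ?_
    rw [← sq_abs]
    nlinarith [hBc i hi, abs_nonneg (h i)]
  rw [← Real.sqrt_mul (Nat.cast_nonneg k)]
  refine Real.sqrt_le_iff.mpr ⟨by positivity, ?_⟩
  nlinarith [sq_nonneg (k * c - L), mul_le_mul_of_nonneg_left hsq (Nat.cast_nonneg (α := ℝ) k)]

theorem sqrt_mul_le_of_subadditive {α : Type*} [DecidableEq α] {h : α → ℝ} {k : ℕ} (hk : 0 < k)
    {A : Finset α} {Φ : Finset α → ℝ} {M : ℝ} (hM : 0 ≤ M)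
    (hΦ_union : ∀ B C, Disjoint B C → Φ (B ∪ C) ≤ Φ B + Φ C)
    (hΦ_block : ∀ B ⊆ A, B.card ≤ k → Φ B ≤ M * √(∑ i ∈ B, h i ^ 2))
    {c : ℝ} (hc : 0 ≤ c) (hAc : ∀ i ∈ A, |h i| ≤ c) :
    √k * Φ A ≤ M * (k * c / 2 + ∑ i ∈ A, |h i|) := by
  induction A using Finset.strongInduction generalizing c with
  | H A ih =>
    have hblock : ∀ B ⊆ A, B.card ≤ k → √k * Φ B ≤ M * ((k * c + ∑ i ∈ B, |h i|) / 2) := by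
      intro B hBA hBk
      calc √k * Φ B ≤ √k * (M * √(∑ i ∈ B, h i ^ 2)) :=
            mul_le_mul_of_nonneg_left (hΦ_block B hBA hBk) (Real.sqrt_nonneg _)
        _ = M * (√k * √(∑ i ∈ B, h i ^ 2)) := mul_left_comm _ _ _
        _ ≤ M * ((k * c + ∑ i ∈ B, |h i|) / 2) :=
            mul_le_mul_of_nonneg_left (sqrt_mul_sqrt_sum_sq_le k hc fun i hi ↦ hAc i (hBA hi)) hM
    by_cases hsmall : A.card ≤ k
    · refine (hblock A subset_rfl hsmall).trans (mul_le_mul_of_nonneg_left ?_ hM)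
      linarith [sum_nonneg fun i (_ : i ∈ A) ↦ abs_nonneg (h i)]
    -- Peel off the `k` largest entries as a block `B`; the rest are bounded by `c' = min_B |h|`,
    -- and `k c' ≤ ‖h_B‖₁` pays for the term `k c' / 2` of the bound on `A \ B`.
    obtain ⟨B, hBA, hBcard, hBtop⟩ :=
      exists_subset_card_eq_forall_le (fun i ↦ |h i|) (not_le.mp hsmall).le
    have hB : B.Nonempty := card_pos.mp (by omega)
    obtain ⟨i₀, hi₀B, hi₀min⟩ := B.exists_min_image (fun i ↦ |h i|) hB
    have hkc : k * |h i₀| ≤ ∑ i ∈ B, |h i| := by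
      simpa [hBcard] using card_nsmul_le_sum B (fun i ↦ |h i|) _ hi₀min
    have hrest := ih (A \ B) (sdiff_ssubset hBA hB)
      (fun B' hB' ↦ hΦ_block B' (hB'.trans sdiff_subset)) (abs_nonneg (h i₀))
      (fun i hi ↦ hBtop i hi i₀ hi₀B)
    have hsplit := sum_sdiff hBA (f := fun i ↦ |h i|)
    calc √k * Φ A = √k * Φ (B ∪ A \ B) := by rw [union_sdiff_of_subset hBA]
      _ ≤ √k * Φ B + √k * Φ (A \ B) := by
          rw [← mul_add]
          exact mul_le_mul_of_nonneg_left (hΦ_union _ _ disjoint_sdiff) (Real.sqrt_nonneg _)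
      _ ≤ M * ((k * c + ∑ i ∈ B, |h i|) / 2) + M * (k * |h i₀| / 2 + ∑ i ∈ A \ B, |h i|) :=
          add_le_add (hblock B hBA hBcard.le) hrest
      _ ≤ M * (k * c / 2 + ∑ i ∈ A, |h i|) := by
          rw [← mul_add]
          exact mul_le_mul_of_nonneg_left (by linarith) hM

theorem l2norm_eq_norm {m : ℕ} (v : Fin m → ℝ) : l2norm v = ‖WithLp.toLp 2 v‖ := by
  simp [l2norm, EuclideanSpace.norm_eq]

theorem l2norm_nonneg {m : ℕ} (v : Fin m → ℝ) : 0 ≤ l2norm v := Real.sqrt_nonneg _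

theorem l2norm_sq {m : ℕ} (v : Fin m → ℝ) : l2norm v ^ 2 = ∑ i, v i ^ 2 :=
  Real.sq_sqrt (sum_nonneg fun _ _ ↦ sq_nonneg _)

theorem l2norm_add_le {m : ℕ} (u v : Fin m → ℝ) : l2norm (u + v) ≤ l2norm u + l2norm v := by
  simpa only [l2norm_eq_norm, WithLp.toLp_add] using norm_add_le _ _

theorem abs_sum_mul_le_l2norm_mul {m : ℕ} (u v : Fin m → ℝ) :
    |∑ i, u i * v i| ≤ l2norm u * l2norm v := by
  simpa [l2norm_eq_norm, PiLp.inner_apply, mul_comm] using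
    abs_real_inner_le_norm (WithLp.toLp 2 u) (WithLp.toLp 2 v)

open scoped Matrix.Norms.L2Operator in
theorem exists_l2norm_mulVec_le {n p : ℕ} (F : Matrix (Fin n) (Fin p) ℝ) :
    ∃ K, 0 ≤ K ∧ ∀ c, l2norm (F *ᵥ c) ≤ K * l2norm c :=
  ⟨‖F‖, norm_nonneg F, fun c ↦ by
    simpa [l2norm_eq_norm] using F.l2_opNorm_mulVec (WithLp.toLp 2 c)⟩

theorem l2norm_indicator {m : ℕ} (A : Finset (Fin m)) (v : Fin m → ℝ) :
    l2norm ((A : Set (Fin m)).indicator v) = √(∑ i ∈ A, v i ^ 2) := by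
  simp [l2norm, Set.indicator_apply, apply_ite (· ^ 2), sum_ite_mem]

theorem l2norm_pi_single {m : ℕ} (j : Fin m) : l2norm (Pi.single j 1) = 1 := by
  simp [l2norm_eq_norm]

theorem l2norm_sq_eq_indicator_add_compl {p : ℕ} (U : Finset (Fin p)) (v : Fin p → ℝ) :
    l2norm v ^ 2 = l2norm ((U : Set (Fin p)).indicator v) ^ 2 +
      l2norm (((Uᶜ : Finset (Fin p)) : Set (Fin p)).indicator v) ^ 2 := by
  rw [l2norm_sq, l2norm_indicator, l2norm_indicator, Real.sq_sqrt (by positivity),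
    Real.sq_sqrt (by positivity), sum_add_sum_compl]

theorem isSparse_indicator {p k : ℕ} {A : Finset (Fin p)} (hA : A.card ≤ k) (v : Fin p → ℝ) :
    IsSparse k ((A : Set (Fin p)).indicator v) :=
  ⟨A, hA, fun _ hi ↦ Set.indicator_of_notMem (by simpa using hi) _⟩

theorem isSparse_pi_single {p k : ℕ} (hk : 1 ≤ k) (j : Fin p) (a : ℝ) :
    IsSparse k (Pi.single j a) :=
  ⟨{j}, by simpa using hk, fun _ hi ↦ Pi.single_eq_of_ne (by simpa using hi) _⟩

theorem Real.sInf_mem_of_isClosed_of_isUpperSet {S : Set ℝ} (hS : IsClosed S)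
    (hne : S.Nonempty) (hup : IsUpperSet S) : sInf S ∈ S := by
  by_cases hb : BddBelow S
  · exact hS.csInf_mem hne hb
  · obtain ⟨x, hxS, hx⟩ := not_bddBelow_iff.mp hb 0
    rw [Real.sInf_of_not_bddBelow hb]
    exact hup hx.le hxS

theorem ripConst_spec {n p k : ℕ} (F : Matrix (Fin n) (Fin p) ℝ) {c : Fin p → ℝ}
    (hc : IsSparse k c) :
    √(1 - ripConst F k) * l2norm c ≤ l2norm (F *ᵥ c) ∧
      l2norm (F *ᵥ c) ≤ √(1 + ripConst F k) * l2norm c := by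
  refine (show ripConst F k ∈ _ from Real.sInf_mem_of_isClosed_of_isUpperSet ?_ ?_ ?_) c hc
  · simp only [Set.ofPred_forall, Set.ofPred_and]
    refine isClosed_iInter fun c ↦ isClosed_iInter fun _ ↦ .inter ?_ ?_ <;>
      exact isClosed_le (by fun_prop) (by fun_prop)
  · obtain ⟨K, hK, hFK⟩ := exists_l2norm_mulVec_le F
    refine ⟨1 + K ^ 2, fun c _ ↦ ⟨?_, ?_⟩⟩
    · rw [Real.sqrt_eq_zero'.mpr (by nlinarith), zero_mul]
      exact l2norm_nonneg _
    · refine (hFK c).trans (mul_le_mul_of_nonneg_right ?_ (l2norm_nonneg c))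
      exact Real.le_sqrt_of_sq_le (by linarith)
  · intro δ δ' hδ hδS c hc
    obtain ⟨hlow, hup⟩ := hδS c hc
    constructor
    · exact le_trans (mul_le_mul_of_nonneg_right (by gcongr) (l2norm_nonneg c)) hlow
    · exact hup.trans (mul_le_mul_of_nonneg_right (by gcongr) (l2norm_nonneg c))

theorem roConst_spec {n p k k' : ℕ} (F : Matrix (Fin n) (Fin p) ℝ) {c c' : Fin p → ℝ}
    (hc : IsSparse k c) (hc' : IsSparse k' c') (hdisj : ∀ i, c i = 0 ∨ c' i = 0) :
    |∑ i, (F *ᵥ c) i * (F *ᵥ c') i| ≤ roConst F k k' * (l2norm c * l2norm c') := by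
  refine (show roConst F k k' ∈ _ from
    Real.sInf_mem_of_isClosed_of_isUpperSet ?_ ?_ ?_) c c' hc hc' hdisj
  · simp only [Set.ofPred_forall]
    exact isClosed_iInter fun c ↦ isClosed_iInter fun c' ↦ isClosed_iInter fun _ ↦
      isClosed_iInter fun _ ↦ isClosed_iInter fun _ ↦ isClosed_le (by fun_prop) (by fun_prop)
  · obtain ⟨K, hK, hFK⟩ := exists_l2norm_mulVec_le F
    refine ⟨K ^ 2, fun c c' _ _ _ ↦ (abs_sum_mul_le_l2norm_mul _ _).trans ?_⟩
    calc l2norm (F *ᵥ c) * l2norm (F *ᵥ c')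
        ≤ (K * l2norm c) * (K * l2norm c') :=
          mul_le_mul (hFK c) (hFK c') (l2norm_nonneg _) (mul_nonneg hK (l2norm_nonneg c))
      _ = K ^ 2 * (l2norm c * l2norm c') := by ring
  · intro θ θ' hθ hθS c c' hc hc' hdisj
    exact (hθS c c' hc hc' hdisj).trans
      (mul_le_mul_of_nonneg_right hθ (mul_nonneg (l2norm_nonneg c) (l2norm_nonneg c')))

theorem roConst_nonneg {n p k k' : ℕ} (F : Matrix (Fin n) (Fin p) ℝ) (hk : 1 ≤ k) (hk' : 1 ≤ k')
    (hp : 2 ≤ p) : 0 ≤ roConst F k k' := by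
  have h := roConst_spec F (isSparse_pi_single hk ⟨0, by omega⟩ 1)
    (isSparse_pi_single hk' ⟨1, by omega⟩ 1) fun i ↦ by
      by_cases hi : i = ⟨0, by omega⟩
      · exact .inr (Pi.single_eq_of_ne (by simp [hi]) _)
      · exact .inl (Pi.single_eq_of_ne hi _)
  rw [l2norm_pi_single, l2norm_pi_single, mul_one, mul_one] at h
  exact (abs_nonneg _).trans h

theorem one_sub_ripConst_mul_sq_le {n p k : ℕ} (F : Matrix (Fin n) (Fin p) ℝ)
    (hδ : ripConst F k ≤ 1) {c : Fin p → ℝ} (hc : IsSparse k c) :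
    (1 - ripConst F k) * l2norm c ^ 2 ≤ l2norm (F *ᵥ c) ^ 2 := by
  have h := pow_le_pow_left₀ (mul_nonneg (Real.sqrt_nonneg _) (l2norm_nonneg c))
    (ripConst_spec F hc).1 2
  rwa [mul_pow, Real.sq_sqrt (by linarith)] at h

theorem sqrt_mul_l2norm_indicator_le {p k : ℕ} (hk : 0 < k) {A : Finset (Fin p)} {h : Fin p → ℝ}
    {c : ℝ} (hc : 0 ≤ c) (hAc : ∀ i ∈ A, |h i| ≤ c) :
    √k * l2norm ((A : Set (Fin p)).indicator h) ≤ k * c / 2 + ∑ i ∈ A, |h i| := by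
  have := sqrt_mul_le_of_subadditive (h := h) (A := A)
    (Φ := fun B ↦ l2norm ((B : Set (Fin p)).indicator h)) hk zero_le_one
    (fun B C hBC ↦ by simpa only [indicator_union_of_disjoint hBC] using l2norm_add_le _ _)
    (fun B _ _ ↦ by rw [one_mul, l2norm_indicator]) hc hAc
  rwa [one_mul] at this

theorem sqrt_mul_abs_inner_mulVec_indicator_le {n p k k' : ℕ} (F : Matrix (Fin n) (Fin p) ℝ)
    (hk : 0 < k) (hθ : 0 ≤ roConst F k k') {A : Finset (Fin p)} {h u : Fin p → ℝ}
    (hu : IsSparse k' u) (hAu : ∀ i ∈ A, u i = 0) {c : ℝ} (hc : 0 ≤ c)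
    (hAc : ∀ i ∈ A, |h i| ≤ c) :
    √k * |∑ i, (F *ᵥ (A : Set (Fin p)).indicator h) i * (F *ᵥ u) i| ≤
      roConst F k k' * l2norm u * (k * c / 2 + ∑ i ∈ A, |h i|) := by
  refine sqrt_mul_le_of_subadditive (h := h) (A := A) (Φ := fun B ↦
    |∑ i, (F *ᵥ (B : Set (Fin p)).indicator h) i * (F *ᵥ u) i|) hk
    (mul_nonneg hθ (l2norm_nonneg u)) (fun B C hBC ↦ ?_) (fun B hBA hBk ↦ ?_) hc hAc
  · simp only [indicator_union_of_disjoint hBC, Matrix.mulVec_add, Pi.add_apply, add_mul,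
      sum_add_distrib]
    exact abs_add_le _ _
  · have hdisj : ∀ i, (B : Set (Fin p)).indicator h i = 0 ∨ u i = 0 := fun i ↦ by
      by_cases hi : i ∈ B
      · exact .inr (hAu i (hBA hi))
      · exact .inl (Set.indicator_of_notMem (by simpa using hi) _)
    have := roConst_spec F (isSparse_indicator hBk h) hu hdisj
    rw [l2norm_indicator] at this
    linarith

theorem sqrt_mul_one_sub_ripConst_mul_sq_le {n p k k' : ℕ} (F : Matrix (Fin n) (Fin p) ℝ)
    (hk : 0 < k) (hδ : ripConst F k' ≤ 1) (hθ : 0 ≤ roConst F k k') {d : Fin p → ℝ}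
    (hFd : F *ᵥ d = 0) {U : Finset (Fin p)} (hU : U.card ≤ k') {c : ℝ} (hc : 0 ≤ c)
    (hUc : ∀ i ∈ Uᶜ, |d i| ≤ c) :
    √k * ((1 - ripConst F k') * l2norm ((U : Set (Fin p)).indicator d) ^ 2) ≤
      roConst F k k' * l2norm ((U : Set (Fin p)).indicator d) *
        (k * c / 2 + ∑ i ∈ Uᶜ, |d i|) := by
  set u := (U : Set (Fin p)).indicator d
  set w := ((Uᶜ : Finset (Fin p)) : Set (Fin p)).indicator d
  have hu : IsSparse k' u := isSparse_indicator hU d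
  have hFu : F *ᵥ u = -(F *ᵥ w) := by
    rw [eq_neg_iff_add_eq_zero, ← Matrix.mulVec_add, indicator_add_indicator_compl, hFd]
  -- `F u = -F w` turns the lower RIP bound on `u` into a restricted orthogonality bound.
  have hrip : (1 - ripConst F k') * l2norm u ^ 2 ≤ |∑ i, (F *ᵥ w) i * (F *ᵥ u) i| := by
    refine (one_sub_ripConst_mul_sq_le F hδ hu).trans ?_
    rw [l2norm_sq, ← abs_neg, ← sum_neg_distrib]
    refine (le_of_eq (sum_congr rfl fun i _ ↦ ?_)).trans (le_abs_self _)
    rw [hFu, Pi.neg_apply]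
    ring
  refine (mul_le_mul_of_nonneg_left hrip (Real.sqrt_nonneg _)).trans ?_
  exact sqrt_mul_abs_inner_mulVec_indicator_le F hk hθ hu
    (fun i hi ↦ Set.indicator_of_notMem (by simpa using hi) _) hc hUc

theorem sum_compl_abs_sub_le_of_l1norm_le {p : ℕ} {x β : Fin p → ℝ} (hx : l1norm x ≤ l1norm β)
    (T : Finset (Fin p)) :
    ∑ i ∈ Tᶜ, |x i - β i| ≤ ∑ i ∈ T, |x i - β i| + 2 * ∑ i ∈ Tᶜ, |β i| := by
  have hT : ∑ i ∈ T, (|β i| - |x i - β i|) ≤ ∑ i ∈ T, |x i| :=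
    sum_le_sum fun i _ ↦ by linarith [abs_sub_abs_le_abs_sub (β i) (x i), abs_sub_comm (x i) (β i)]
  have hTc : ∑ i ∈ Tᶜ, (|x i - β i| - |β i|) ≤ ∑ i ∈ Tᶜ, |x i| :=
    sum_le_sum fun i _ ↦ by linarith [abs_sub (x i) (β i)]
  rw [sum_sub_distrib] at hT hTc
  unfold l1norm at hx
  rw [← sum_add_sum_compl T, ← sum_add_sum_compl T (fun i ↦ |β i|)] at hx
  linarith

-- Used with `x = ‖d_U‖₂`, `D = ‖d_{Uᶜ}‖₂`, `N = ‖d‖₂`, `s = √k` and `P` the shifting bound.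
theorem le_of_restricted_bounds {δ θ s x D P e N : ℝ} (hθ : 0 ≤ θ) (hδθ : δ + θ < 1) (hs : 0 < s)
    (hx : 0 ≤ x) (hD : 0 ≤ D) (hxP : s * ((1 - δ) * x ^ 2) ≤ θ * x * P) (hDP : s * D ≤ P)
    (hP : P ≤ s * x + 2 * e) (hN : N ^ 2 = x ^ 2 + D ^ 2) :
    N ≤ 2 * √2 * (1 - δ) / (1 - δ - θ) * (s⁻¹ * e) := by
  set q := 2 * e / s
  have hDq : D ≤ x + q := by
    rw [← mul_le_mul_iff_of_pos_left hs, mul_add, mul_div_cancel₀ _ hs.ne']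
    linarith
  have hxq : (1 - δ - θ) * x ≤ θ * q := by
    rcases hx.eq_or_lt with rfl | hxpos
    · simpa using mul_nonneg hθ (by linarith : 0 ≤ q)
    · have hPq : P ≤ s * (x + q) := by rwa [mul_add, mul_div_cancel₀ _ hs.ne']
      have h : s * x * ((1 - δ) * x) ≤ s * x * (θ * (x + q)) := by
        nlinarith [mul_le_mul_of_nonneg_left hPq (mul_nonneg hθ hx)]
      linarith [le_of_mul_le_mul_left h (mul_pos hs hxpos)]
  have hq : 0 ≤ q := by nlinarith
  have hxq' : x + q ≤ (1 - δ) * q / (1 - δ - θ) := by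
    rw [le_div_iff₀ (by linarith)]
    linarith
  calc N ≤ √(2 * (x + q) ^ 2) := Real.le_sqrt_of_sq_le (by nlinarith)
    _ = √2 * (x + q) := by rw [Real.sqrt_mul zero_le_two, Real.sqrt_sq (by linarith)]
    _ ≤ √2 * ((1 - δ) * q / (1 - δ - θ)) := mul_le_mul_of_nonneg_left hxq' (Real.sqrt_nonneg _)
    _ = 2 * √2 * (1 - δ) / (1 - δ - θ) * (s⁻¹ * e) := by ring

theorem l2norm_le_of_mulVec_eq_zero {n p m : ℕ} (F : Matrix (Fin n) (Fin p) ℝ) (hm : 1 ≤ m)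
    (hp : 5 * m ≤ p) (hcond : ripConst F (3 * m) + roConst F (2 * m) (3 * m) < 1)
    {d : Fin p → ℝ} (hFd : F *ᵥ d = 0) {T : Finset (Fin p)} (hT : T.card = 2 * m) {e : ℝ}
    (hcone : ∑ i ∈ Tᶜ, |d i| ≤ ∑ i ∈ T, |d i| + 2 * e) :
    l2norm d ≤ 2 * √2 * (1 - ripConst F (3 * m)) /
        (1 - ripConst F (3 * m) - roConst F (2 * m) (3 * m)) * ((√(2 * m))⁻¹ * e) := by
  have hθ : 0 ≤ roConst F (2 * m) (3 * m) := roConst_nonneg F (by omega) (by omega) (by omega)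
  obtain ⟨U, hTU, hU, c, hc, hUc, hshift⟩ := exists_superset_forall_abs_le d T (m := m)
    (by omega) (by rw [card_compl, hT, Fintype.card_fin]; omega)
  have hmc : ((2 * m : ℕ) : ℝ) * c / 2 = m * c := by push_cast; ring
  have hrip := sqrt_mul_one_sub_ripConst_mul_sq_le F (k := 2 * m) (by omega) (by linarith) hθ
    hFd (hU.trans (by omega)) hc hUc
  have htail := sqrt_mul_l2norm_indicator_le (k := 2 * m) (by omega) hc hUc
  rw [hmc, Nat.cast_mul, Nat.cast_ofNat] at hrip htail
  have hTsum : ∑ i ∈ T, |d i| ≤ √(2 * m) * l2norm ((U : Set (Fin p)).indicator d) := by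
    refine (sum_abs_le_sqrt_card_mul_sqrt_sum_sq T d).trans ?_
    rw [l2norm_indicator, hT, Nat.cast_mul, Nat.cast_ofNat]
    gcongr
  exact le_of_restricted_bounds hθ hcond (by positivity) (l2norm_nonneg _) (l2norm_nonneg _)
    hrip htail (by linarith) (l2norm_sq_eq_indicator_add_compl U d)

theorem noiseless_recovery_error_general {n p m : ℕ} (F : Matrix (Fin n) (Fin p) ℝ)
    (hm : 1 ≤ m) (hp : 5 * m ≤ p)
    (hcond : ripConst F (3 * m) + roConst F (2 * m) (3 * m) < 1)
    (β : Fin p → ℝ) (y : Fin n → ℝ) (hy : y = F.mulVec β)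
    (βhat : Fin p → ℝ) (hfeas : F.mulVec βhat = y)
    (hmin : ∀ γ : Fin p → ℝ, F.mulVec γ = y → l1norm βhat ≤ l1norm γ)
    (T : Finset (Fin p)) (hT : T.card = 2 * m) :
    l2norm (fun i => βhat i - β i) ≤
      (2 * Real.sqrt 2 * (1 - ripConst F (3 * m)) /
        (1 - ripConst F (3 * m) - roConst F (2 * m) (3 * m))) *
      ((Real.sqrt (2 * m))⁻¹ * ∑ j ∈ Tᶜ, |β j|) := by
  have hFd : F *ᵥ (βhat - β) = 0 := by rw [Matrix.mulVec_sub, hfeas, hy, sub_self]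
  exact l2norm_le_of_mulVec_eq_zero F hm hp hcond hFd hT
    (sum_compl_abs_sub_le_of_l1norm_le (hmin β hy.symm) T)

/-- Noiseless recovery error bound. With `k = 2*m` even, if
`δ_{1.5k} + θ_{k,1.5k} < 1` and `β̂` minimizes the ℓ₁ norm subject to `Fγ = Fβ`, then
`‖β̂ - β‖₂ ≤ C₀ k^{-1/2} ‖β_{-max(k)}‖₁` where
`C₀ = 2√2(1 - δ_{1.5k}) / (1 - δ_{1.5k} - θ_{k,1.5k})`. The set `T` consists of indices of
the `k` largest-in-absolute-value entries of `β`, so `∑ j ∉ T, |β j| = ‖β_{-max(k)}‖₁`. -/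
theorem noiseless_recovery_error {n p m : ℕ} (F : Matrix (Fin n) (Fin p) ℝ)
    (hm : 1 ≤ m) (hp : 5 * m ≤ p)
    (hcond : ripConst F (3 * m) + roConst F (2 * m) (3 * m) < 1)
    (β : Fin p → ℝ) (y : Fin n → ℝ) (hy : y = F.mulVec β)
    (βhat : Fin p → ℝ) (hfeas : F.mulVec βhat = y)
    (hmin : ∀ γ : Fin p → ℝ, F.mulVec γ = y → l1norm βhat ≤ l1norm γ)
    (T : Finset (Fin p)) (hT : T.card = 2 * m)
    (hTmax : ∀ i ∈ T, ∀ j ∉ T, |β j| ≤ |β i|) :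
    l2norm (fun i => βhat i - β i) ≤
      (2 * Real.sqrt 2 * (1 - ripConst F (3 * m)) /
        (1 - ripConst F (3 * m) - roConst F (2 * m) (3 * m))) *
      ((Real.sqrt (2 * m))⁻¹ * ∑ j ∈ Tᶜ, |β j|) :=
  noiseless_recovery_error_general F hm hp hcond β y hy βhat hfeas hmin T hT
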